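/- arXiv:2402.03091 — 8 statements merged into one kernel-verified Lean document; each statement's English description precedes it below -/
import Mathlib

section
/- Let g ∈ Lip(ℝ) satisfy g(x) ≥ g(−1) for all x ∈ ℝ and g(x) ≥ x + 1 + g(−1) for all x ∈ [−1,0]. Then for every ε ∈ (0, 1/4), (4πε)^{−1/2} ∫_ℝ e^{−y²/(4ε)} g(y−1) dy − g(−1) ≥ ((e−1)/(√π · e)) √ε. -/
/-!
Subtracting `g(-1)` (the Gaussian kernel has unit mass) leaves the kernel integrated against
`g(y-1) - g(-1)`, which is nonnegative everywhere and at least `y` on `[0,1]`. Hence the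
difference is at least the normalised integral of `y e^{-y²/(4ε)}` over `[0,1]`, which equals
`2ε(1 - e^{-1/(4ε)}) / √(4πε) ≥ (1 - e^{-1}) √ε / √π` as soon as `4ε ≤ 1`.
-/

noncomputable section

open MeasureTheory Real Set

theorem LipschitzWith.abs_comp_sub_le {g : ℝ → ℝ} {K : NNReal} (hg : LipschitzWith K g)
    (a y : ℝ) : |g (y - a)| ≤ |g (-a)| + K * |y| := by
  have h := hg.dist_le_mul (y - a) (-a)
  rw [Real.dist_eq, Real.dist_eq, sub_neg_eq_add, sub_add_cancel] at h
  linarith [abs_sub_abs_le_abs_sub (g (y - a)) (g (-a))]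

theorem integrable_exp_neg_mul_sq_mul_of_abs_le {b A B : ℝ} (hb : 0 < b) {f : ℝ → ℝ}
    (hf : AEStronglyMeasurable f) (hgrowth : ∀ y, |f y| ≤ A + B * |y|) :
    Integrable fun y => exp (-b * y ^ 2) * f y := by
  have hdom : Integrable fun y => A * exp (-b * y ^ 2) + B * |y * exp (-b * y ^ 2)| :=
    ((integrable_exp_neg_mul_sq hb).const_mul A).add
      ((integrable_mul_exp_neg_mul_sq hb).abs.const_mul B)
  refine hdom.mono' ((by fun_prop : Continuous fun y => exp (-b * y ^ 2)).aestronglyMeasurable.mul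
    hf) (Filter.Eventually.of_forall fun y => ?_)
  have hexp := (exp_pos (-b * y ^ 2)).le
  rw [Real.norm_eq_abs, abs_mul, abs_mul, abs_of_nonneg hexp]
  nlinarith [mul_le_mul_of_nonneg_left (hgrowth y) hexp]

theorem LipschitzWith.integrable_exp_neg_mul_sq_mul_comp_sub {b : ℝ} (hb : 0 < b) {g : ℝ → ℝ}
    {K : NNReal} (hg : LipschitzWith K g) (a : ℝ) :
    Integrable fun y => exp (-b * y ^ 2) * g (y - a) :=
  integrable_exp_neg_mul_sq_mul_of_abs_le hb
    (hg.continuous.comp (continuous_sub_right a)).aestronglyMeasurable (hg.abs_comp_sub_le a)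

theorem intervalIntegral_mul_exp_neg_mul_sq {b : ℝ} (hb : b ≠ 0) (a : ℝ) :
    ∫ y in (0)..a, y * exp (-b * y ^ 2) = (1 - exp (-b * a ^ 2)) / (2 * b) := by
  have hderiv : ∀ y : ℝ, HasDerivAt (fun t => -exp (-b * t ^ 2) / (2 * b))
      (y * exp (-b * y ^ 2)) y := by
    intro y
    refine ((((hasDerivAt_pow 2 y).const_mul (-b)).exp.neg).div_const (2 * b)).congr_deriv ?_
    field_simp
    ring
  rw [intervalIntegral.integral_eq_sub_of_hasDerivAt (fun y _ => hderiv y)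
    ((by fun_prop : Continuous fun y : ℝ => y * exp (-b * y ^ 2)).intervalIntegrable _ _)]
  simp only [ne_eq, OfNat.ofNat_ne_zero, not_false_eq_true, zero_pow, mul_zero, exp_zero]
  ring

theorem le_integral_exp_neg_mul_sq_mul_sub {b : ℝ} (hb : 0 < b) {g : ℝ → ℝ} {K : NNReal}
    (hg : LipschitzWith K g) (hmin : ∀ x, g (-1) ≤ g x)
    (hlin : ∀ x ∈ Icc (-1 : ℝ) 0, x + 1 + g (-1) ≤ g x) :
    (1 - exp (-b)) / (2 * b) ≤ ∫ y, exp (-b * y ^ 2) * (g (y - 1) - g (-1)) := by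
  have hint : Integrable fun y => exp (-b * y ^ 2) * (g (y - 1) - g (-1)) := by
    simp_rw [mul_sub]
    exact (hg.integrable_exp_neg_mul_sq_mul_comp_sub hb 1).sub
      ((integrable_exp_neg_mul_sq hb).mul_const _)
  have hnonneg : ∀ y, 0 ≤ exp (-b * y ^ 2) * (g (y - 1) - g (-1)) := fun y =>
    mul_nonneg (exp_pos _).le (sub_nonneg.mpr (hmin _))
  have hlinear : ∀ y ∈ Ioc (0 : ℝ) 1, y * exp (-b * y ^ 2) ≤
      exp (-b * y ^ 2) * (g (y - 1) - g (-1)) := by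
    rintro y ⟨hy0, hy1⟩
    have := hlin (y - 1) ⟨by linarith, by linarith⟩
    rw [mul_comm]
    exact mul_le_mul_of_nonneg_left (by linarith) (exp_pos _).le
  calc (1 - exp (-b)) / (2 * b)
      = ∫ y in Ioc (0 : ℝ) 1, y * exp (-b * y ^ 2) := by
        rw [← intervalIntegral.integral_of_le zero_le_one,
          intervalIntegral_mul_exp_neg_mul_sq hb.ne', one_pow, mul_one]
    _ ≤ ∫ y in Ioc (0 : ℝ) 1, exp (-b * y ^ 2) * (g (y - 1) - g (-1)) :=
        setIntegral_mono_on (integrable_mul_exp_neg_mul_sq hb).integrableOn hint.integrableOn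
          measurableSet_Ioc hlinear
    _ ≤ ∫ y, exp (-b * y ^ 2) * (g (y - 1) - g (-1)) :=
        setIntegral_le_integral hint (Filter.Eventually.of_forall hnonneg)

/-- If `g` is Lipschitz on `ℝ`, `g(x) ≥ g(-1)` for all `x`, and
`g(x) ≥ x + 1 + g(-1)` on `[-1,0]`, then for every `ε ∈ (0,1/4)`,
`(4πε)^{-1/2} ∫_ℝ e^{-y²/(4ε)} g(y-1) dy - g(-1) ≥ ((e-1)/(√π e)) √ε`. -/
theorem statement4
    (g : ℝ → ℝ) (K : NNReal) (hg : LipschitzWith K g)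
    (hmin : ∀ x : ℝ, g (-1) ≤ g x)
    (hlin : ∀ x ∈ Set.Icc (-1:ℝ) 0, x + 1 + g (-1) ≤ g x)
    (ε : ℝ) (hε : ε ∈ Set.Ioo (0:ℝ) (1/4)) :
    (Real.exp 1 - 1) / (Real.sqrt Real.pi * Real.exp 1) * Real.sqrt ε
      ≤ (Real.sqrt (4 * Real.pi * ε))⁻¹
          * (∫ y : ℝ, Real.exp (-(y ^ 2) / (4 * ε)) * g (y - 1)) - g (-1) := by
  obtain ⟨hε0, hε4⟩ := hε
  set b : ℝ := (4 * ε)⁻¹ with hb_def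
  have hb : 0 < b := by positivity
  have hkernel : ∀ y : ℝ, exp (-(y ^ 2) / (4 * ε)) = exp (-b * y ^ 2) := fun y => by
    rw [hb_def]; ring_nf
  have hmass : ∫ y : ℝ, exp (-b * y ^ 2) = √(4 * π * ε) := by
    rw [integral_gaussian, hb_def, div_inv_eq_mul, mul_comm, mul_right_comm]
  have hsplit : ∫ y, exp (-(y ^ 2) / (4 * ε)) * g (y - 1)
      = (∫ y, exp (-b * y ^ 2) * (g (y - 1) - g (-1))) + √(4 * π * ε) * g (-1) := by
    simp_rw [hkernel, mul_sub]
    rw [integral_sub (hg.integrable_exp_neg_mul_sq_mul_comp_sub hb 1)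
      ((integrable_exp_neg_mul_sq hb).mul_const _), integral_mul_const, hmass, sub_add_cancel]
  have hlower := le_integral_exp_neg_mul_sq_mul_sub hb hg hmin hlin
  have hb_one : 1 ≤ b := (one_le_inv₀ (by positivity)).mpr (by linarith)
  have hexp_le : exp (-b) ≤ exp (-1) := exp_le_exp.mpr (neg_le_neg hb_one)
  have hsqrt : √(4 * π * ε) = 2 * √π * √ε := by
    rw [mul_assoc, sqrt_mul (by norm_num), sqrt_mul pi_pos.le,
      show (4 : ℝ) = 2 ^ 2 by norm_num, sqrt_sq zero_le_two, mul_assoc]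
  rw [hsplit, mul_add, inv_mul_cancel_left₀ (by positivity), add_sub_cancel_right]
  calc (exp 1 - 1) / (√π * exp 1) * √ε
      = (√(4 * π * ε))⁻¹ * ((1 - exp (-1)) / (2 * b)) := by
        rw [hsqrt, hb_def, exp_neg]
        field_simp
        rw [sq_sqrt hε0.le]
        ring
    _ ≤ (√(4 * π * ε))⁻¹ * ((1 - exp (-b)) / (2 * b)) := by gcongr
    _ ≤ _ := by gcongr
end
end

section
/- Fix ε > 0 and define, for t > 0, u^ε(0,t) := −2ε log[ (4πεt)^{−1/2} ∫_ℝ e^{−y²/(4εt) + |y|/(2ε)} dy ]. Then lim_{t→0⁺} ( u^ε(0,t) + t/2 ) / √(tε) = −2/√π. -/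
/-!
Completing the square in the exponent and using the evenness in `y` gives the closed form
`(4πεt)^{-1/2} ∫ e^{-y²/(4εt) + |y|/(2ε)} dy = e^{a²} (1 + erf a)` with `a = √(tε)/(2ε)`.
Since `2ε a² = t/2` exactly cancels the inviscid value, `(u^ε(0,t) + t/2)/√(tε) = -log(1 + erf a)/a`,
which tends to `-erf'(0) = -2/√π` as `a → 0⁺`.
-/

noncomputable section

open MeasureTheory Set Filter Topology Real

theorem integral_comp_add_right_Ioi {E : Type*} [NormedAddCommGroup E] [NormedSpace ℝ E]
    (g : ℝ → E) (a d : ℝ) : ∫ x in Ioi a, g (x + d) = ∫ x in Ioi (a + d), g x := by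
  have hd : MeasurableEmbedding (· + d : ℝ → ℝ) :=
    (Homeomorph.addRight d).isClosedEmbedding.measurableEmbedding
  have h := hd.setIntegral_map (μ := volume) g (Ioi (a + d))
  rw [map_add_right_eq_self volume d] at h
  rw [h, show (· + d) ⁻¹' Ioi (a + d) = Ioi a by ext x; simp]

def erf (x : ℝ) : ℝ := 2 / √π * ∫ z in (0 : ℝ)..x, exp (-z ^ 2)

theorem erf_zero : erf 0 = 0 := by simp [erf]

theorem hasDerivAt_erf (x : ℝ) : HasDerivAt erf (2 / √π * exp (-x ^ 2)) x :=
  ((continuous_exp.comp (continuous_pow 2).neg).integral_hasStrictDerivAt 0 x).hasDerivAt.const_mul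
    _

theorem integrable_exp_neg_sq : Integrable fun z : ℝ => exp (-z ^ 2) := by
  simpa using integrable_exp_neg_mul_sq one_pos

theorem integral_Ioi_neg_exp_neg_sq (x : ℝ) :
    ∫ z in Ioi (-x), exp (-z ^ 2) = √π / 2 * (1 + erf x) := by
  have hIic (c : ℝ) : ∫ z in Iic c, exp (-z ^ 2) = ∫ z in Ioi (-c), exp (-z ^ 2) := by
    rw [← integral_comp_neg_Iic]
    simp only [neg_sq]
  have hsplit := intervalIntegral.integral_Iic_sub_Iic (a := 0) (b := x)
    integrable_exp_neg_sq.integrableOn integrable_exp_neg_sq.integrableOn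
  have hhalf : ∫ z in Ioi (0 : ℝ), exp (-z ^ 2) = √π / 2 := by
    simpa using integral_gaussian_Ioi 1
  rw [hIic, hIic, neg_zero, hhalf] at hsplit
  have : √π ≠ 0 := (sqrt_pos.2 pi_pos).ne'
  rw [erf, ← hsplit]
  field_simp
  ring

theorem one_add_erf_pos (x : ℝ) : 0 < 1 + erf x := by
  have : NeZero (volume.restrict (Ioi (-x))) := ⟨by simp⟩
  have hpos : 0 < ∫ z in Ioi (-x), exp (-z ^ 2) :=
    integral_exp_pos integrable_exp_neg_sq.integrableOn
  rw [integral_Ioi_neg_exp_neg_sq] at hpos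
  exact pos_of_mul_pos_right hpos (by positivity)

theorem integral_Ioi_exp_neg_sq_div_add_mul {s : ℝ} (hs : 0 < s) (c : ℝ) :
    ∫ y in Ioi 0, exp (-(y / s) ^ 2 + c * y) =
      s * (√π / 2) * exp ((c * s / 2) ^ 2) * (1 + erf (c * s / 2)) := by
  set m := c * s / 2
  have hcomplete (y : ℝ) :
      exp (-(y / s) ^ 2 + c * y) = exp (m ^ 2) * exp (-((y + -(m * s)) * s⁻¹) ^ 2) := by
    rw [← exp_add]
    congr 1
    field_simp
    ring
  simp_rw [hcomplete]
  rw [integral_const_mul, integral_comp_add_right_Ioi (fun z => exp (-(z * s⁻¹) ^ 2)),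
    integral_comp_mul_right_Ioi (fun z => exp (-z ^ 2)) _ (inv_pos.2 hs), smul_eq_mul, inv_inv,
    zero_add, show -(m * s) * s⁻¹ = -m by field_simp, integral_Ioi_neg_exp_neg_sq]
  ring

theorem integral_exp_neg_sq_div_add_mul_abs {s : ℝ} (hs : 0 < s) (c : ℝ) :
    ∫ y, exp (-(y / s) ^ 2 + c * |y|) =
      s * √π * exp ((c * s / 2) ^ 2) * (1 + erf (c * s / 2)) := by
  calc ∫ y, exp (-(y / s) ^ 2 + c * |y|)
      _ = ∫ y, exp (-(|y| / s) ^ 2 + c * |y|) := by simp_rw [div_pow, sq_abs]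
      _ = 2 * ∫ y in Ioi 0, exp (-(y / s) ^ 2 + c * y) :=
        integral_comp_abs (f := fun y => exp (-(y / s) ^ 2 + c * y))
      _ = _ := by rw [integral_Ioi_exp_neg_sq_div_add_mul hs]; ring

theorem tendsto_log_div_of_hasDerivAt {f : ℝ → ℝ} {f' : ℝ} (hf : HasDerivAt f f' 0)
    (hf0 : f 0 = 1) : Tendsto (fun x => log (f x) / x) (𝓝[≠] 0) (𝓝 f') := by
  have hlog := (hasDerivAt_log (by rw [hf0]; exact one_ne_zero)).comp 0 hf
  rw [hf0, inv_one, one_mul] at hlog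
  simpa [hf0, div_eq_inv_mul] using hlog.tendsto_slope_zero

theorem tendsto_log_one_add_erf_div :
    Tendsto (fun x => log (1 + erf x) / x) (𝓝[≠] 0) (𝓝 (2 / √π)) := by
  simpa using tendsto_log_div_of_hasDerivAt ((hasDerivAt_erf 0).const_add 1) (by simp [erf_zero])

theorem heat_mean_exp_abs_eq {ε t : ℝ} (hε : 0 < ε) (ht : 0 < t) :
    (√(4 * π * ε * t))⁻¹ * ∫ y, exp (-(y ^ 2) / (4 * ε * t) + |y| / (2 * ε)) =
      exp ((√(t * ε) / (2 * ε)) ^ 2) * (1 + erf (√(t * ε) / (2 * ε))) := by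
  set τ := √(t * ε)
  have hτ : 0 < τ := sqrt_pos.2 (mul_pos ht hε)
  have hτsq : τ ^ 2 = t * ε := sq_sqrt (mul_pos ht hε).le
  have hexponent (y : ℝ) :
      -(y ^ 2) / (4 * ε * t) + |y| / (2 * ε) = -(y / (2 * τ)) ^ 2 + (2 * ε)⁻¹ * |y| := by
    field_simp
    rw [hτsq]
    ring
  have hsqrt : √(4 * π * ε * t) = 2 * τ * √π := by
    rw [sqrt_eq_iff_mul_self_eq_of_pos (by positivity)]
    linear_combination (4 * √π * √π) * hτsq + (4 * t * ε) * mul_self_sqrt pi_pos.le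
  have hm : (2 * ε)⁻¹ * (2 * τ) / 2 = τ / (2 * ε) := by field_simp
  simp_rw [hexponent]
  rw [integral_exp_neg_sq_div_add_mul_abs (by positivity), hm, hsqrt]
  field_simp

theorem viscous_excess_div_eq {ε t : ℝ} (hε : 0 < ε) (ht : 0 < t) :
    (-2 * ε * log ((√(4 * π * ε * t))⁻¹
        * ∫ y, exp (-(y ^ 2) / (4 * ε * t) + |y| / (2 * ε))) + t / 2) / √(t * ε) =
      -(log (1 + erf (√(t * ε) / (2 * ε))) / (√(t * ε) / (2 * ε))) := by
  set a := √(t * ε) / (2 * ε)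
  have hτ : 0 < √(t * ε) := sqrt_pos.2 (mul_pos ht hε)
  have hsq : a ^ 2 = t / (4 * ε) := by
    simp only [a, div_pow, sq_sqrt (mul_pos ht hε).le]
    field_simp
    ring
  have hroot : √(t * ε) = 2 * ε * a := by
    simp only [a]
    field_simp
  rw [heat_mean_exp_abs_eq hε ht, log_mul (exp_pos _).ne' (one_add_erf_pos _).ne', log_exp,
    hsq, hroot]
  field_simp
  ring

/-- Fix `ε > 0` and let
`u^ε(0,t) = -2ε log[(4πεt)^{-1/2} ∫_ℝ e^{-y²/(4εt) + |y|/(2ε)} dy]` for `t > 0`. Then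
`(u^ε(0,t) + t/2)/√(tε) → -2/√π` as `t → 0⁺`. -/
theorem statement7 (ε : ℝ) (hε : 0 < ε) :
    Filter.Tendsto
      (fun t : ℝ =>
        (-2 * ε * Real.log ((Real.sqrt (4 * Real.pi * ε * t))⁻¹
            * ∫ y : ℝ, Real.exp (-(y ^ 2) / (4 * ε * t) + |y| / (2 * ε))) + t / 2)
          / Real.sqrt (t * ε))
      (nhdsWithin 0 (Set.Ioi 0)) (nhds (-2 / Real.sqrt Real.pi)) := by
  have ha : Tendsto (fun t => √(t * ε) / (2 * ε)) (𝓝[>] 0) (𝓝[≠] 0) := by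
    refine tendsto_nhdsWithin_iff.2 ⟨?_, eventually_nhdsWithin_of_forall fun t ht => ?_⟩
    · have hcont : Continuous fun t => √(t * ε) / (2 * ε) := by fun_prop
      simpa using hcont.continuousWithinAt.tendsto (x := 0) (s := Ioi 0)
    · have := sqrt_pos.2 (mul_pos (mem_Ioi.1 ht) hε)
      exact (div_pos this (by positivity)).ne'
  rw [neg_div]
  exact (tendsto_log_one_add_erf_div.comp ha).neg.congr'
    (eventually_nhdsWithin_of_forall fun t ht => (viscous_excess_div_eq hε ht).symm)
end
end

section
/- Let g : ℝ → ℝ be Lipschitz, set h(y) := g(y) + y²/2 for y ∈ ℝ, and let ȳ ∈ ℝ be a global minimum point of h (such a point exists since h is continuous and coercive). Then there exists ε₀ ∈ (0,1) such that for all ε ∈ (0, ε₀), | 2ε log[ (4πε)^{−1/2} ∫_ℝ e^{−(h(y)−h(ȳ))/(2ε)} dy ] | ≤ 2ε |log ε|. -/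
/-!
Put `φ := h - h ȳ ≥ 0`. Since `g` is Lipschitz, `φ y` differs from `(y - ȳ)²/2` by at most
`M |y - ȳ|` with `M = K + |ȳ|`. Hence `e^{-φ/(2ε)}` is at least a constant on the ball of
radius `2ε` around `ȳ`, and is dominated by the integrable `e^{-φ}` once `2ε ≤ 1`. So the
Laplace integral lies between `c ε` and `C`, and `(4πε)^{-1/2}` times it lies between
`ε` and `ε⁻¹` for small `ε`.
-/

open MeasureTheory Filter Topology Real Set

lemma LipschitzWith.abs_add_sq_div_two_sub_le {g : ℝ → ℝ} {K : NNReal} (hg : LipschitzWith K g)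
    (a y : ℝ) :
    |(g y + y ^ 2 / 2) - (g a + a ^ 2 / 2) - (y - a) ^ 2 / 2| ≤ (K + |a|) * |y - a| := by
  have hlip : |g y - g a| ≤ K * |y - a| := by
    simpa only [Real.dist_eq] using hg.dist_le_mul y a
  calc |(g y + y ^ 2 / 2) - (g a + a ^ 2 / 2) - (y - a) ^ 2 / 2|
      = |(g y - g a) + a * (y - a)| := by ring_nf
    _ ≤ |g y - g a| + |a| * |y - a| := by rw [← abs_mul]; exact abs_add_le _ _
    _ ≤ (K + |a|) * |y - a| := by linarith

lemma eventually_le_mul_sqrt {c : ℝ} (hc : 0 < c) : ∀ᶠ ε in 𝓝[>] (0 : ℝ), ε ≤ c * √ε := by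
  have hsqrt : Tendsto (fun ε : ℝ => √ε) (𝓝[>] 0) (𝓝 0) :=
    (continuous_sqrt.tendsto' 0 0 sqrt_zero).mono_left nhdsWithin_le_nhds
  filter_upwards [self_mem_nhdsWithin, hsqrt (Iic_mem_nhds hc)] with ε hε hεc
  calc ε = √ε * √ε := (mul_self_sqrt hε.le).symm
    _ ≤ c * √ε := by gcongr; exact hεc

lemma eventually_div_sqrt_le_inv (C : ℝ) : ∀ᶠ ε in 𝓝[>] (0 : ℝ), C / √ε ≤ ε⁻¹ := by
  have hlim : Tendsto (fun ε : ℝ => C * √ε) (𝓝[>] 0) (𝓝 0) := by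
    simpa using ((continuous_sqrt.tendsto' 0 0 sqrt_zero).const_mul C).mono_left
      nhdsWithin_le_nhds
  filter_upwards [self_mem_nhdsWithin, hlim (Iic_mem_nhds one_pos)] with ε hε hεC
  have hs : 0 < √ε := sqrt_pos.2 hε
  calc C / √ε = C * √ε * ε⁻¹ := by
        field_simp
        rw [sq_sqrt hε.le, mul_div_cancel_right₀ C hε.ne']
    _ ≤ 1 * ε⁻¹ := by gcongr; exacts [(inv_pos.2 hε).le, hεC]
    _ = ε⁻¹ := one_mul _

section LaplaceIntegral

variable {φ : ℝ → ℝ} {a M : ℝ}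

lemma integrable_exp_neg_div_of_quadratic_lower (hφm : Measurable φ)
    (hφ : ∀ y, (y - a) ^ 2 / 2 - M * |y - a| ≤ φ y) {t : ℝ} (ht : 0 < t) :
    Integrable fun y => exp (-φ y / t) := by
  have hgauss : Integrable fun y => exp (M ^ 2 / t) * exp (-(1 / (4 * t)) * (y - a) ^ 2) :=
    ((integrable_exp_neg_mul_sq (by positivity)).comp_sub_right a).const_mul _
  refine hgauss.mono' (by fun_prop : Measurable _).aestronglyMeasurable
    (Eventually.of_forall fun y => ?_)
  rw [Real.norm_eq_abs, abs_of_pos (exp_pos _), ← exp_add, exp_le_exp]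
  -- `t²/2 - M t ≥ t²/4 - M²` by completing the square
  have hquad : (y - a) ^ 2 / 4 - M ^ 2 ≤ φ y := by
    nlinarith [hφ y, sq_nonneg (|y - a| / 2 - M), sq_abs (y - a)]
  calc -φ y / t ≤ -((y - a) ^ 2 / 4 - M ^ 2) / t := by gcongr
    _ = M ^ 2 / t + -(1 / (4 * t)) * (y - a) ^ 2 := by field_simp; ring

lemma integral_exp_neg_div_mono (hφm : Measurable φ)
    (hφ : ∀ y, (y - a) ^ 2 / 2 - M * |y - a| ≤ φ y) (hφ0 : ∀ y, 0 ≤ φ y) {s t : ℝ}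
    (hs : 0 < s) (hst : s ≤ t) :
    ∫ y, exp (-φ y / s) ≤ ∫ y, exp (-φ y / t) :=
  integral_mono (integrable_exp_neg_div_of_quadratic_lower hφm hφ hs)
    (integrable_exp_neg_div_of_quadratic_lower hφm hφ (hs.trans_le hst))
    fun y => by
      rw [exp_le_exp, neg_div, neg_div, neg_le_neg_iff]
      exact div_le_div_of_nonneg_left (hφ0 y) hs hst

lemma mul_exp_le_integral_exp_neg_div (hM : 0 ≤ M)
    (hφ : ∀ y, φ y ≤ (y - a) ^ 2 / 2 + M * |y - a|) {t : ℝ} (ht : 0 < t) (ht1 : t ≤ 1)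
    (hint : Integrable fun y => exp (-φ y / t)) :
    2 * t * exp (-(1 / 2 + M)) ≤ ∫ y, exp (-φ y / t) := by
  have hball : ∀ y ∈ Metric.closedBall a t, exp (-(1 / 2 + M)) ≤ exp (-φ y / t) := by
    intro y hy
    rw [Metric.mem_closedBall, Real.dist_eq] at hy
    have hφt : φ y ≤ (1 / 2 + M) * t := by
      have hsq : (y - a) ^ 2 ≤ t := by nlinarith [sq_abs (y - a), abs_nonneg (y - a)]
      nlinarith [hφ y, mul_le_mul_of_nonneg_left hy hM]
    rw [exp_le_exp, le_div_iff₀ ht]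
    linarith
  calc 2 * t * exp (-(1 / 2 + M))
      = exp (-(1 / 2 + M)) * volume.real (Metric.closedBall a t) := by
        rw [Real.volume_real_closedBall ht.le]; ring
    _ ≤ ∫ y in Metric.closedBall a t, exp (-φ y / t) :=
        setIntegral_ge_of_const_le_real measurableSet_closedBall measure_closedBall_lt_top.ne
          hball hint.integrableOn
    _ ≤ ∫ y, exp (-φ y / t) :=
        setIntegral_le_integral hint (Eventually.of_forall fun _ => (exp_pos _).le)

lemma eventually_inv_sqrt_mul_integral_exp_neg_div_mem_Icc (hφm : Measurable φ)
    (hφ0 : ∀ y, 0 ≤ φ y) (hφ : ∀ y, |φ y - (y - a) ^ 2 / 2| ≤ M * |y - a|) :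
    ∀ᶠ ε in 𝓝[>] (0 : ℝ), (√(4 * π * ε))⁻¹ * ∫ y, exp (-φ y / (2 * ε)) ∈ Icc ε ε⁻¹ := by
  have hM : 0 ≤ M := by simpa using (abs_nonneg _).trans (hφ (a + 1))
  have hlow : ∀ y, (y - a) ^ 2 / 2 - M * |y - a| ≤ φ y := fun y => by
    linarith [(abs_le.1 (hφ y)).1]
  have hup : ∀ y, φ y ≤ (y - a) ^ 2 / 2 + M * |y - a| := fun y => by
    linarith [(abs_le.1 (hφ y)).2]
  set c := exp (-(1 / 2 + M))
  set C := ∫ y, exp (-φ y / 1)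
  filter_upwards [self_mem_nhdsWithin, nhdsWithin_le_nhds (Iio_mem_nhds one_half_pos),
    eventually_le_mul_sqrt (c := 4 * c / √(4 * π)) (by positivity),
    eventually_div_sqrt_le_inv C] with ε (hε : 0 < ε) (hε2 : ε < 1 / 2) hεlow hεup
  have h2ε : 0 < 2 * ε := by positivity
  rw [inv_mul_eq_div]
  constructor
  · calc ε ≤ 4 * c / √(4 * π) * √ε := hεlow
      _ = 2 * (2 * ε) * c / √(4 * π * ε) := by
          rw [sqrt_mul (by positivity) ε]
          field_simp
          rw [sq_sqrt hε.le]
          ring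
      _ ≤ (∫ y, exp (-φ y / (2 * ε))) / √(4 * π * ε) := by
          gcongr
          exact mul_exp_le_integral_exp_neg_div hM hup h2ε (by linarith)
            (integrable_exp_neg_div_of_quadratic_lower hφm hlow h2ε)
  · calc (∫ y, exp (-φ y / (2 * ε))) / √(4 * π * ε) ≤ C / √(4 * π * ε) := by
          gcongr
          exact integral_exp_neg_div_mono hφm hlow hφ0 h2ε (by linarith)
      _ ≤ C / √ε := by
          gcongr
          nlinarith [pi_gt_three]
      _ ≤ ε⁻¹ := hεup

end LaplaceIntegral

lemma abs_log_le_abs_log_of_le_of_le_inv {ε x : ℝ} (hε : 0 < ε) (hεx : ε ≤ x) (hxε : x ≤ ε⁻¹) :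
    |log x| ≤ |log ε| := by
  have hε1 : ε ≤ 1 := by
    by_contra! h
    linarith [inv_lt_one_of_one_lt₀ h]
  rw [abs_of_nonpos (log_nonpos hε.le hε1), abs_le]
  constructor
  · linarith [log_le_log hε hεx]
  · simpa [log_inv] using log_le_log (hε.trans_le hεx) hxε

lemma exists_Ioo_forall_of_eventually_nhdsGT {P : ℝ → Prop} (hP : ∀ᶠ ε in 𝓝[>] (0 : ℝ), P ε) :
    ∃ ε₀ ∈ Ioo (0 : ℝ) 1, ∀ ε ∈ Ioo (0 : ℝ) ε₀, P ε := by
  obtain ⟨b, hb, hbP⟩ := (nhdsGT_basis (0 : ℝ)).eventually_iff.1 hP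
  refine ⟨min b (1 / 2), ⟨by positivity, by linarith [min_le_right b (1 / 2)]⟩, ?_⟩
  exact fun ε hε => hbP ⟨hε.1, hε.2.trans_le (min_le_left _ _)⟩

/-- Let `g : ℝ → ℝ` be Lipschitz, `h(y) = g(y) + y²/2`, and let `ȳ` be a
global minimum point of `h`. Then there is `ε₀ ∈ (0,1)` such that for all `ε ∈ (0,ε₀)`,
`|2ε log[(4πε)^{-1/2} ∫_ℝ e^{-(h(y)-h(ȳ))/(2ε)} dy]| ≤ 2ε|log ε|`. -/
theorem statement8
    (g : ℝ → ℝ) (K : NNReal) (hg : LipschitzWith K g)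
    (h : ℝ → ℝ) (hh : ∀ y : ℝ, h y = g y + y ^ 2 / 2)
    (ybar : ℝ) (hybar : ∀ y : ℝ, h ybar ≤ h y) :
    ∃ ε₀ ∈ Set.Ioo (0:ℝ) 1, ∀ ε ∈ Set.Ioo (0:ℝ) ε₀,
      |2 * ε * Real.log ((Real.sqrt (4 * Real.pi * ε))⁻¹
          * ∫ y : ℝ, Real.exp (-(h y - h ybar) / (2 * ε)))|
        ≤ 2 * ε * |Real.log ε| := by
  set φ : ℝ → ℝ := fun y => h y - h ybar
  have hφm : Measurable φ := by
    have := hg.continuous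
    simp only [φ, hh]
    fun_prop
  have hφ : ∀ y, |φ y - (y - ybar) ^ 2 / 2| ≤ (K + |ybar|) * |y - ybar| := fun y => by
    simpa only [φ, hh] using hg.abs_add_sq_div_two_sub_le ybar y
  have hφ0 : ∀ y, 0 ≤ φ y := fun y => sub_nonneg.2 (hybar y)
  obtain ⟨ε₀, hε₀, hbound⟩ := exists_Ioo_forall_of_eventually_nhdsGT
    (eventually_inv_sqrt_mul_integral_exp_neg_div_mem_Icc hφm hφ0 hφ)
  refine ⟨ε₀, hε₀, fun ε hε => ?_⟩
  obtain ⟨hεX, hXε⟩ := hbound ε hε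
  rw [abs_mul, abs_of_pos (by linarith [hε.1] : (0 : ℝ) < 2 * ε)]
  exact mul_le_mul_of_nonneg_left (abs_log_le_abs_log_of_le_of_le_inv hε.1 hεX hXε)
    (by linarith [hε.1])
end

section
/- Let g : ℝ → ℝ be Lipschitz with g(y) = −y²/2 for all y ∈ [−1,1] and g(y) ≥ −y²/2 for all y ∈ ℝ, and set h(y) := g(y) + y²/2 (so h ≥ 0 on ℝ and h ≡ 0 on [−1,1]). Then there exists ε₀ > 0 such that for all ε ∈ (0, ε₀), 2ε log[ (4πε)^{−1/2} ∫_ℝ e^{−h(y)/(2ε)} dy ] ≥ (1/2) ε |log ε|. -/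
noncomputable section

open MeasureTheory

/-- Let `g : ℝ → ℝ` be Lipschitz with `g(y) = -y²/2` on `[-1,1]` and
`g(y) ≥ -y²/2` on `ℝ`, and set `h(y) = g(y) + y²/2`. Then there is `ε₀ > 0` such that for
all `ε ∈ (0,ε₀)`, `2ε log[(4πε)^{-1/2} ∫_ℝ e^{-h(y)/(2ε)} dy] ≥ (1/2) ε |log ε|`. -/
theorem statement10
    (g : ℝ → ℝ) (K : NNReal) (hg : LipschitzWith K g)
    (hg1 : ∀ y ∈ Set.Icc (-1:ℝ) 1, g y = -(y ^ 2) / 2)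
    (hg2 : ∀ y : ℝ, -(y ^ 2) / 2 ≤ g y)
    (h : ℝ → ℝ) (hh : ∀ y : ℝ, h y = g y + y ^ 2 / 2) :
    ∃ ε₀ > (0:ℝ), ∀ ε ∈ Set.Ioo (0:ℝ) ε₀,
      1 / 2 * ε * |Real.log ε|
        ≤ 2 * ε * Real.log ((Real.sqrt (4 * Real.pi * ε))⁻¹
            * ∫ y : ℝ, Real.exp (-(h y) / (2 * ε))) := by
  have hg0 : g 0 = 0 := by
    have := hg1 0 (by norm_num); simpa using this
  have hcont : Continuous h := by
    have : h = fun y => g y + y ^ 2 / 2 := funext hh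
    rw [this]; exact hg.continuous.add (by continuity)
  have hnn : ∀ y, 0 ≤ h y := by
    intro y; rw [hh y]; have := hg2 y; linarith
  have hlow : ∀ y, (y:ℝ) ^ 2 / 4 - (K:ℝ) ^ 2 ≤ h y := by
    intro y
    have h1 : |g y - g 0| ≤ (K:ℝ) * |y - 0| := by
      have := hg.dist_le_mul y 0
      simpa [Real.dist_eq] using this
    have h2 : -((K:ℝ) * |y|) ≤ g y := by
      rw [hg0] at h1; simp only [sub_zero] at h1
      have := (abs_le.mp h1).1; linarith
    have h3 : (K:ℝ) * |y| ≤ y ^ 2 / 4 + (K:ℝ) ^ 2 := by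
      nlinarith [sq_nonneg (|y| / 2 - (K:ℝ)), sq_abs y]
    rw [hh y]; nlinarith
  have pi_pos := Real.pi_pos
  refine ⟨1/10, by norm_num, ?_⟩
  intro ε ⟨hε0, hε1⟩
  have h2ε : (0:ℝ) < 2 * ε := by linarith
  -- integrability
  have hint : Integrable (fun y : ℝ => Real.exp (-(h y) / (2 * ε))) := by
    have hbd : Integrable (fun y : ℝ =>
        Real.exp ((K:ℝ)^2 / (2*ε)) * Real.exp (-(1/(8*ε)) * y ^ 2)) :=
      (integrable_exp_neg_mul_sq (by positivity)).const_mul _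
    refine hbd.mono' ?_ ?_
    · exact (Real.continuous_exp.comp ((hcont.neg).div_const _)).aestronglyMeasurable
    · filter_upwards with y
      rw [Real.norm_eq_abs, abs_of_nonneg (Real.exp_pos _).le,
        ← Real.exp_add]
      apply Real.exp_le_exp.mpr
      have := hlow y
      rw [div_le_iff₀ h2ε] at *
      have : ((K:ℝ)^2 / (2*ε) + -(1/(8*ε)) * y ^ 2) * (2*ε)
          = (K:ℝ)^2 - y ^ 2 / 4 := by
        field_simp; ring
      rw [this]
      have := hlow y; linarith
  -- lower bound on the integral
  have hI2 : (2:ℝ) ≤ ∫ y : ℝ, Real.exp (-(h y) / (2 * ε)) := by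
    have hset : ∫ y in Set.Icc (-1:ℝ) 1, Real.exp (-(h y) / (2 * ε))
        = ∫ _y in Set.Icc (-1:ℝ) 1, (1:ℝ) := by
      apply setIntegral_congr_fun measurableSet_Icc
      intro y hy
      have : h y = 0 := by rw [hh y, hg1 y hy]; ring
      simp [this]
    have hone : ∫ _y in Set.Icc (-1:ℝ) 1, (1:ℝ) = 2 := by
      simp [Real.volume_Icc]; norm_num
    calc (2:ℝ) = ∫ y in Set.Icc (-1:ℝ) 1, Real.exp (-(h y) / (2 * ε)) := by
            rw [hset, hone]
      _ ≤ ∫ y : ℝ, Real.exp (-(h y) / (2 * ε)) :=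
            setIntegral_le_integral hint
              (Filter.Eventually.of_forall fun y => (Real.exp_pos _).le)
  have hsq : (0:ℝ) < Real.sqrt (4 * Real.pi * ε) := Real.sqrt_pos.mpr (by positivity)
  have hlog1 : Real.log ((Real.sqrt (4 * Real.pi * ε))⁻¹ * 2)
      ≤ Real.log ((Real.sqrt (4 * Real.pi * ε))⁻¹
          * ∫ y : ℝ, Real.exp (-(h y) / (2 * ε))) := by
    apply Real.log_le_log (by positivity)
    exact mul_le_mul_of_nonneg_left hI2 (by positivity)
  have hval : Real.log ((Real.sqrt (4 * Real.pi * ε))⁻¹ * 2)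
      = Real.log 2 - (Real.log 4 + Real.log Real.pi + Real.log ε) / 2 := by
    rw [Real.log_mul (by positivity) (by norm_num), Real.log_inv,
      Real.log_sqrt (by positivity), Real.log_mul (by positivity) (ne_of_gt hε0),
      Real.log_mul (by norm_num) (ne_of_gt pi_pos)]
    ring
  have hlog4 : Real.log 4 = 2 * Real.log 2 := by
    rw [show (4:ℝ) = 2 ^ 2 by norm_num, Real.log_pow]; norm_num
  have hεlt1 : ε < 1 := by linarith
  have hlogε_neg : Real.log ε < 0 := Real.log_neg hε0 hεlt1
  have habs : |Real.log ε| = -Real.log ε := abs_of_neg hlogε_neg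
  -- key numeric facts
  have hpisq : Real.pi ^ 2 ≤ 10 := by nlinarith [Real.pi_lt_d2]
  have h2logpi : 2 * Real.log Real.pi ≤ Real.log 10 := by
    have h5 := Real.log_le_log (by positivity) hpisq
    rw [Real.log_pow] at h5; push_cast at h5; linarith
  have hlogε10 : Real.log ε ≤ -Real.log 10 := by
    have := Real.log_le_log hε0 hε1.le
    rwa [show (1:ℝ)/10 = 10⁻¹ by norm_num, Real.log_inv] at this
  calc 1 / 2 * ε * |Real.log ε|
      ≤ 2 * ε * Real.log ((Real.sqrt (4 * Real.pi * ε))⁻¹ * 2) := by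
        rw [habs, hval, hlog4]
        have key : 1 / 2 * (-Real.log ε)
            ≤ 2 * (Real.log 2 - (2 * Real.log 2 + Real.log Real.pi + Real.log ε) / 2) := by
          linarith
        nlinarith [hε0.le, key]
    _ ≤ 2 * ε * Real.log ((Real.sqrt (4 * Real.pi * ε))⁻¹
          * ∫ y : ℝ, Real.exp (-(h y) / (2 * ε))) :=
        mul_le_mul_of_nonneg_left hlog1 (by linarith)
end
end

section
/- Let n ≥ 1, let σ > 0 and B ≥ 0 satisfy B² < 4σ, and let b ∈ ℝⁿ with |b| ≤ B. Define γ := 4σ/(|b|² + 4σ) and η := (4σ − B²)/(4σ + B²). Then γ ∈ (0,1], η ∈ (0,1], the identity 2(γ − 1)² + γ²|b|²/(2σ) = 2 − 2γ holds, and 2 − 2γ ≤ 1 − η. -/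
noncomputable section

/-- Let `σ > 0` and `B ≥ 0` with `B² < 4σ`, and `b ∈ ℝⁿ` with
`|b| ≤ B`. With `γ = 4σ/(|b|² + 4σ)` and `η = (4σ - B²)/(4σ + B²)`, one has
`γ ∈ (0,1]`, `η ∈ (0,1]`, the Cordes-type identity
`2(γ-1)² + γ²|b|²/(2σ) = 2 - 2γ`, and `2 - 2γ ≤ 1 - η`. -/
theorem statement14
    (n : ℕ) (hn : 0 < n) (σ B : ℝ) (hσ : 0 < σ) (hB : 0 ≤ B) (hBσ : B ^ 2 < 4 * σ)
    (b : EuclideanSpace ℝ (Fin n)) (hb : ‖b‖ ≤ B)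
    (γ η : ℝ)
    (hγ : γ = 4 * σ / (‖b‖ ^ 2 + 4 * σ))
    (hη : η = (4 * σ - B ^ 2) / (4 * σ + B ^ 2)) :
    γ ∈ Set.Ioc (0:ℝ) 1 ∧ η ∈ Set.Ioc (0:ℝ) 1 ∧
    2 * (γ - 1) ^ 2 + γ ^ 2 * ‖b‖ ^ 2 / (2 * σ) = 2 - 2 * γ ∧
    2 - 2 * γ ≤ 1 - η := by
  set t := ‖b‖ ^ 2 with ht
  have ht0 : 0 ≤ t := sq_nonneg _
  have htB : t ≤ B ^ 2 := by
    have := norm_nonneg b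
    nlinarith [hb]
  have hD : 0 < t + 4 * σ := by linarith
  have hD2 : 0 < 4 * σ + B ^ 2 := by nlinarith
  refine ⟨⟨?_, ?_⟩, ⟨?_, ?_⟩, ?_, ?_⟩
  · rw [hγ]; positivity
  · rw [hγ]; rw [div_le_one hD]; linarith
  · rw [hη]; apply div_pos; linarith; linarith
  · rw [hη]; rw [div_le_one hD2]; nlinarith
  · rw [hγ]; field_simp; ring
  · rw [hγ, hη]
    have h1 : 2 - 2 * (4 * σ / (t + 4 * σ)) = 2 * t / (t + 4 * σ) := by
      field_simp; ring
    have h2 : 1 - (4 * σ - B ^ 2) / (4 * σ + B ^ 2) = 2 * B ^ 2 / (4 * σ + B ^ 2) := by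
      field_simp; ring
    rw [h1, h2, div_le_div_iff₀ hD hD2]
    nlinarith
end
end

section
/- Let n ≥ 1, let σ > 0 and B ≥ 0 satisfy B² < 4σ, and let b ∈ ℝⁿ with |b| ≤ B. Define γ := 4σ/(|b|² + 4σ) and η := (4σ − B²)/(4σ + B²). Then for all d ∈ ℝ, q ∈ ℝⁿ, and u ∈ ℝ, ( (1 − γ) d − γ (b·q) − (1 − γ) σ u )² ≤ (1 − η) ( d² + 2σ |q|² + σ² u² ). -/
/-!
Write `γ = 4σ / (|b|² + 4σ)`. The left-hand side is the square of the inner product of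
`(1 - γ, γ b / √(2σ), -(1 - γ))` with `(d, √(2σ) q, σ u)`, so by Cauchy–Schwarz (done below
via `|⟪w, q⟫| ≤ ‖w‖‖q‖` and AM-GM, which avoids the square roots) it is at most
`(2(1 - γ)² + γ²|b|²/(2σ))(d² + 2σ|q|² + σ²u²)`. The Cordes identity
`2(1 - γ)² + γ²|b|²/(2σ) = 2 - 2γ = 2|b|²/(|b|² + 4σ)` and monotonicity of `x ↦ x/(x + 4σ)`
then bound the constant by `2B²/(B² + 4σ) = 1 - η`.
-/

lemma sq_sub_sub_le_of_abs_le {σ a d s u W Q : ℝ} (hσ : 0 < σ) (hs : |s| ≤ W * Q) :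
    (a * d - s - a * σ * u) ^ 2
      ≤ (2 * a ^ 2 + W ^ 2 / (2 * σ)) * (d ^ 2 + 2 * σ * Q ^ 2 + σ ^ 2 * u ^ 2) := by
  have h2σ : 2 * a ^ 2 + W ^ 2 / (2 * σ) = (4 * σ * a ^ 2 + W ^ 2) / (2 * σ) := by
    field_simp
    ring
  rw [h2σ, div_mul_eq_mul_div, le_div_iff₀ (by positivity)]
  have h_abs : |a * d - s - a * σ * u| ≤ |a * (d - σ * u)| + W * Q := by
    calc |a * d - s - a * σ * u| = |a * (d - σ * u) - s| := by ring_nf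
      _ ≤ |a * (d - σ * u)| + |s| := abs_sub _ _
      _ ≤ |a * (d - σ * u)| + W * Q := by gcongr
  have h_sq := sq_le_sq' (neg_le_of_abs_le h_abs) (le_of_abs_le h_abs)
  rw [abs_mul, add_sq, mul_pow, sq_abs, sq_abs] at h_sq
  have amgm : 8 * σ * (|a| * |d - σ * u|) * (W * Q)
      ≤ 16 * σ ^ 2 * a ^ 2 * Q ^ 2 + W ^ 2 * (d - σ * u) ^ 2 := by
    have := sq_nonneg (4 * σ * |a| * Q - W * |d - σ * u|)
    rw [← sq_abs a, ← sq_abs (d - σ * u)]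
    linarith
  -- what is left over is `2σa²(d + σu)² + W²(d + σu)²/2`
  nlinarith [mul_le_mul_of_nonneg_left h_sq (by positivity : (0 : ℝ) ≤ 2 * σ),
    mul_nonneg hσ.le (sq_nonneg (a * (d + σ * u))), mul_nonneg (sq_nonneg W) (sq_nonneg (d + σ * u))]

lemma sq_sub_inner_sub_le {E : Type*} [NormedAddCommGroup E] [InnerProductSpace ℝ E] {σ : ℝ}
    (hσ : 0 < σ) (a d u : ℝ) (w q : E) :
    (a * d - inner ℝ w q - a * σ * u) ^ 2
      ≤ (2 * a ^ 2 + ‖w‖ ^ 2 / (2 * σ)) * (d ^ 2 + 2 * σ * ‖q‖ ^ 2 + σ ^ 2 * u ^ 2) :=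
  sq_sub_sub_le_of_abs_le hσ (abs_real_inner_le_norm w q)

lemma cordes_identity {σ β γ : ℝ} (hσ : 0 < σ) (hγ : γ = 4 * σ / (β ^ 2 + 4 * σ)) :
    2 * (1 - γ) ^ 2 + γ ^ 2 * β ^ 2 / (2 * σ) = 2 - 2 * γ := by
  have : β ^ 2 + 4 * σ ≠ 0 := by positivity
  subst hγ
  field_simp
  ring

lemma two_sub_two_mul_le_one_sub {σ β B γ η : ℝ} (hσ : 0 < σ) (hβ : 0 ≤ β) (hβB : β ≤ B)
    (hγ : γ = 4 * σ / (β ^ 2 + 4 * σ)) (hη : η = (4 * σ - B ^ 2) / (4 * σ + B ^ 2)) :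
    2 - 2 * γ ≤ 1 - η := by
  have hβ2 : β ^ 2 ≤ B ^ 2 := pow_le_pow_left₀ hβ hβB 2
  have key : 1 - η - (2 - 2 * γ)
      = 8 * σ * (B ^ 2 - β ^ 2) / ((4 * σ + B ^ 2) * (β ^ 2 + 4 * σ)) := by
    subst hγ hη
    field_simp
    ring
  have : 0 ≤ B ^ 2 - β ^ 2 := sub_nonneg.mpr hβ2
  rw [← sub_nonneg, key]
  positivity

theorem statement15_general
    (n : ℕ) (σ B : ℝ) (hσ : 0 < σ)
    (b : EuclideanSpace ℝ (Fin n)) (hb : ‖b‖ ≤ B)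
    (γ η : ℝ)
    (hγ : γ = 4 * σ / (‖b‖ ^ 2 + 4 * σ))
    (hη : η = (4 * σ - B ^ 2) / (4 * σ + B ^ 2)) :
    ∀ (d : ℝ) (q : EuclideanSpace ℝ (Fin n)) (u : ℝ),
      ((1 - γ) * d - γ * (inner ℝ b q : ℝ) - (1 - γ) * σ * u) ^ 2
        ≤ (1 - η) * (d ^ 2 + 2 * σ * ‖q‖ ^ 2 + σ ^ 2 * u ^ 2) := by
  intro d q u
  have cauchy_schwarz := sq_sub_inner_sub_le hσ (1 - γ) d u (γ • b) q
  rw [real_inner_smul_left, norm_smul, mul_pow, Real.norm_eq_abs, sq_abs,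
    cordes_identity hσ hγ] at cauchy_schwarz
  calc ((1 - γ) * d - γ * inner ℝ b q - (1 - γ) * σ * u) ^ 2
      ≤ (2 - 2 * γ) * (d ^ 2 + 2 * σ * ‖q‖ ^ 2 + σ ^ 2 * u ^ 2) := cauchy_schwarz
    _ ≤ (1 - η) * (d ^ 2 + 2 * σ * ‖q‖ ^ 2 + σ ^ 2 * u ^ 2) := by
      have h := two_sub_two_mul_le_one_sub hσ (norm_nonneg b) hb hγ hη
      exact mul_le_mul_of_nonneg_right h (by positivity)

/-- Let `σ > 0` and `B ≥ 0` with `B² < 4σ`, and `b ∈ ℝⁿ` with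
`|b| ≤ B`. With `γ = 4σ/(|b|² + 4σ)` and `η = (4σ - B²)/(4σ + B²)`, for all `d ∈ ℝ`,
`q ∈ ℝⁿ`, `u ∈ ℝ`:
`((1-γ)d - γ(b·q) - (1-γ)σu)² ≤ (1-η)(d² + 2σ|q|² + σ²u²)`. -/
theorem statement15
    (n : ℕ) (hn : 0 < n) (σ B : ℝ) (hσ : 0 < σ) (hB : 0 ≤ B) (hBσ : B ^ 2 < 4 * σ)
    (b : EuclideanSpace ℝ (Fin n)) (hb : ‖b‖ ≤ B)
    (γ η : ℝ)
    (hγ : γ = 4 * σ / (‖b‖ ^ 2 + 4 * σ))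
    (hη : η = (4 * σ - B ^ 2) / (4 * σ + B ^ 2)) :
    ∀ (d : ℝ) (q : EuclideanSpace ℝ (Fin n)) (u : ℝ),
      ((1 - γ) * d - γ * (inner ℝ b q : ℝ) - (1 - γ) * σ * u) ^ 2
        ≤ (1 - η) * (d ^ 2 + 2 * σ * ‖q‖ ^ 2 + σ ^ 2 * u ^ 2) :=
  statement15_general n σ B hσ b hb γ η hγ hη
end

section
/- Let F : ℝ → ℝ be Lipschitz with Lipschitz constant L ≥ 0, let Δx > 0, let ε ≥ (L Δx)/2, and let 0 < Δt ≤ Δx²/(2ε). Define G : ℝ³ → ℝ by G(a,b,c) := b − Δt [ F((c − a)/(2Δx)) − ε (c − 2b + a)/Δx² ]. Then G is nondecreasing in each of its three arguments: if a ≤ a' then G(a,b,c) ≤ G(a',b,c); if b ≤ b' then G(a,b,c) ≤ G(a,b',c); and if c ≤ c' then G(a,b,c) ≤ G(a,b,c'). -/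
noncomputable section

/-- Let `F : ℝ → ℝ` be Lipschitz with constant `L ≥ 0`, `Δx > 0`,
`ε ≥ LΔx/2`, and `0 < Δt ≤ Δx²/(2ε)`. Then the finite-difference update function
`G(a,b,c) = b - Δt [F((c-a)/(2Δx)) - ε(c-2b+a)/Δx²]` is nondecreasing in each of its
three arguments (monotonicity of the scheme). -/
theorem statement16
    (F : ℝ → ℝ) (L : ℝ) (hL : 0 ≤ L)
    (hF : ∀ p q : ℝ, |F p - F q| ≤ L * |p - q|)
    (Δx : ℝ) (hΔx : 0 < Δx)
    (ε : ℝ) (hε : L * Δx / 2 ≤ ε)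
    (Δt : ℝ) (hΔt : 0 < Δt) (hΔt2 : Δt ≤ Δx ^ 2 / (2 * ε))
    (G : ℝ → ℝ → ℝ → ℝ)
    (hG : ∀ a b c : ℝ,
      G a b c = b - Δt * (F ((c - a) / (2 * Δx)) - ε * (c - 2 * b + a) / Δx ^ 2)) :
    (∀ a a' b c : ℝ, a ≤ a' → G a b c ≤ G a' b c) ∧
    (∀ a b b' c : ℝ, b ≤ b' → G a b c ≤ G a b' c) ∧
    (∀ a b c c' : ℝ, c ≤ c' → G a b c ≤ G a b c') := by
  have hεnn : (0:ℝ) ≤ ε := le_trans (by positivity) hε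
  have hεpos : 0 < ε := by
    rcases hεnn.lt_or_eq with h | h
    · exact h
    · exfalso; rw [← h, mul_zero, div_zero] at hΔt2; linarith
  have hx2 : (0:ℝ) < Δx ^ 2 := by positivity
  have hCFL : Δt * (2 * ε) ≤ Δx ^ 2 := by
    rwa [le_div_iff₀ (by positivity)] at hΔt2
  refine ⟨?_, ?_, ?_⟩
  · intro a a' b c h
    rw [hG, hG]
    have key : F ((c - a') / (2 * Δx)) - F ((c - a) / (2 * Δx))
        ≤ L * ((a' - a) / (2 * Δx)) := by
      have h1 := hF ((c - a') / (2 * Δx)) ((c - a) / (2 * Δx))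
      have heq : |(c - a') / (2 * Δx) - (c - a) / (2 * Δx)| = (a' - a) / (2 * Δx) := by
        rw [div_sub_div_same, abs_div, abs_of_pos (by linarith : (0:ℝ) < 2 * Δx),
          show c - a' - (c - a) = -(a' - a) by ring, abs_neg,
          abs_of_nonneg (by linarith : (0:ℝ) ≤ a' - a)]
      calc F ((c - a') / (2 * Δx)) - F ((c - a) / (2 * Δx))
          ≤ |F ((c - a') / (2 * Δx)) - F ((c - a) / (2 * Δx))| := le_abs_self _
        _ ≤ L * |(c - a') / (2 * Δx) - (c - a) / (2 * Δx)| := h1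
        _ = L * ((a' - a) / (2 * Δx)) := by rw [heq]
    have h2 : L * ((a' - a) / (2 * Δx)) ≤ ε * (a' - a) / Δx ^ 2 := by
      rw [mul_div_assoc' L, div_le_div_iff₀ (by linarith : (0:ℝ) < 2 * Δx) hx2]
      nlinarith [mul_nonneg (mul_nonneg (sub_nonneg.2 h) hΔx.le)
        (by linarith : (0:ℝ) ≤ 2 * ε - L * Δx)]
    have key2 : Δt * (F ((c - a') / (2 * Δx)) - F ((c - a) / (2 * Δx)))
        ≤ Δt * (ε * (a' - a) / Δx ^ 2) :=
      mul_le_mul_of_nonneg_left (le_trans key h2) hΔt.le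
    have hdiff : ε * (c - 2 * b + a') / Δx ^ 2
        = ε * (c - 2 * b + a) / Δx ^ 2 + ε * (a' - a) / Δx ^ 2 := by
      field_simp; ring
    nlinarith [key2, hdiff]
  · intro a b b' c h
    rw [hG, hG]
    have hdiff : (b' - Δt * (F ((c - a) / (2 * Δx)) - ε * (c - 2 * b' + a) / Δx ^ 2))
        - (b - Δt * (F ((c - a) / (2 * Δx)) - ε * (c - 2 * b + a) / Δx ^ 2))
        = (b' - b) * (Δx ^ 2 - 2 * (Δt * ε)) / Δx ^ 2 := by
      field_simp; ring
    have hnn : 0 ≤ (b' - b) * (Δx ^ 2 - 2 * (Δt * ε)) / Δx ^ 2 :=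
      div_nonneg (mul_nonneg (sub_nonneg.2 h) (by linarith)) hx2.le
    linarith
  · intro a b c c' h
    rw [hG, hG]
    have key : F ((c' - a) / (2 * Δx)) - F ((c - a) / (2 * Δx))
        ≤ L * ((c' - c) / (2 * Δx)) := by
      have h1 := hF ((c' - a) / (2 * Δx)) ((c - a) / (2 * Δx))
      have heq : |(c' - a) / (2 * Δx) - (c - a) / (2 * Δx)| = (c' - c) / (2 * Δx) := by
        rw [div_sub_div_same, abs_div, abs_of_pos (by linarith : (0:ℝ) < 2 * Δx),
          show c' - a - (c - a) = c' - c by ring,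
          abs_of_nonneg (by linarith : (0:ℝ) ≤ c' - c)]
      calc F ((c' - a) / (2 * Δx)) - F ((c - a) / (2 * Δx))
          ≤ |F ((c' - a) / (2 * Δx)) - F ((c - a) / (2 * Δx))| := le_abs_self _
        _ ≤ L * |(c' - a) / (2 * Δx) - (c - a) / (2 * Δx)| := h1
        _ = L * ((c' - c) / (2 * Δx)) := by rw [heq]
    have h2 : L * ((c' - c) / (2 * Δx)) ≤ ε * (c' - c) / Δx ^ 2 := by
      rw [mul_div_assoc' L, div_le_div_iff₀ (by linarith : (0:ℝ) < 2 * Δx) hx2]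
      nlinarith [mul_nonneg (mul_nonneg (sub_nonneg.2 h) hΔx.le)
        (by linarith : (0:ℝ) ≤ 2 * ε - L * Δx)]
    have key2 : Δt * (F ((c' - a) / (2 * Δx)) - F ((c - a) / (2 * Δx)))
        ≤ Δt * (ε * (c' - c) / Δx ^ 2) :=
      mul_le_mul_of_nonneg_left (le_trans key h2) hΔt.le
    have hdiff : ε * (c' - 2 * b + a) / Δx ^ 2
        = ε * (c - 2 * b + a) / Δx ^ 2 + ε * (c' - c) / Δx ^ 2 := by
      field_simp; ring
    nlinarith [key2, hdiff]
end
end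

section
/- Let F : ℝ → ℝ be continuous with F(p) = p for all p ∈ [0,1]. Then the function ψ : ℝ × [0,∞) → ℝ defined by ψ(x,t) := max{ x − t + 1, 0 } is a viscosity supersolution of ψ_t + F(ψ_x) = 0 in ℝ × (0,∞); that is, for every C² function φ and every point (x₀,t₀) ∈ ℝ × (0,∞) at which ψ − φ attains a local minimum, ∂_tφ(x₀,t₀) + F(∂_xφ(x₀,t₀)) ≥ 0. -/
open Set Filter Topology

/-!
`ψ(x,t) = h(x - t)` with `h y = max (y + 1) 0` is constant along the characteristics
`x - t = const`, so a test function touching `ψ` from below at `(x₀,t₀)` has a local maximum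
along the diagonal there, giving `∂ₜφ + ∂ₓφ = 0`. In the `x`-direction it touches a
monotone function whose slopes are at most `1`, so `∂ₓφ ∈ [0,1]`, where `F` is the identity.
-/

section OneDimensional

variable {f g : ℝ → ℝ} {a x : ℝ}

theorem HasDerivAt.nonneg_of_isLocalMin_sub (hf : HasDerivAt f a x) (hg : Monotone g)
    (hmin : IsLocalMin (fun y => g y - f y) x) : 0 ≤ a := by
  refine ge_of_tendsto (hasDerivAt_iff_tendsto_slope_left_right.mp hf).1 ?_
  filter_upwards [self_mem_nhdsWithin, nhdsWithin_le_nhds hmin] with y (hy : y < x) hy_min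
  rw [slope_def_field]
  exact div_nonneg_of_nonpos (by linarith [hg hy.le]) (by linarith)

theorem HasDerivAt.nonpos_of_isLocalMin_sub (hf : HasDerivAt f a x) (hg : Antitone g)
    (hmin : IsLocalMin (fun y => g y - f y) x) : a ≤ 0 := by
  refine le_of_tendsto (hasDerivAt_iff_tendsto_slope_left_right.mp hf).2 ?_
  filter_upwards [self_mem_nhdsWithin, nhdsWithin_le_nhds hmin] with y (hy : x < y) hy_min
  rw [slope_def_field]
  exact div_nonpos_of_nonpos_of_nonneg (by linarith [hg hy.le]) (by linarith)

theorem HasDerivAt.mem_Icc_of_isLocalMin_sub (hf : HasDerivAt f a x) (hg : Monotone g)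
    (hg_slope : Antitone fun y => g y - y) (hmin : IsLocalMin (fun y => g y - f y) x) :
    a ∈ Icc 0 1 := by
  refine ⟨hf.nonneg_of_isLocalMin_sub hg hmin, ?_⟩
  have hmin' : IsLocalMin (fun y => (g y - y) - (f y - y)) x := by
    simpa only [sub_sub_sub_cancel_right] using hmin
  linarith [(hf.sub (hasDerivAt_id x)).nonpos_of_isLocalMin_sub hg_slope hmin']

end OneDimensional

section TravelingWave

variable {g : ℝ → ℝ} {φ : ℝ × ℝ → ℝ} {x₀ t₀ : ℝ}

theorem deriv_add_deriv_eq_zero_of_isLocalMin_sub_comp_sub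
    (hφ : DifferentiableAt ℝ φ (x₀, t₀))
    (hmin : IsLocalMin (fun p => g (p.1 - p.2) - φ p) (x₀, t₀)) :
    deriv (fun τ => φ (x₀, τ)) t₀ + deriv (fun ξ => φ (ξ, t₀)) x₀ = 0 := by
  set L := fderiv ℝ φ (x₀, t₀)
  have ht : deriv (fun τ => φ (x₀, τ)) t₀ = L (0, 1) :=
    (hφ.hasFDerivAt.comp_hasDerivAt t₀
      ((hasDerivAt_const t₀ x₀).prodMk (hasDerivAt_id t₀))).deriv
  have hx : deriv (fun ξ => φ (ξ, t₀)) x₀ = L (1, 0) :=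
    (hφ.hasFDerivAt.comp_hasDerivAt x₀
      ((hasDerivAt_id x₀).prodMk (hasDerivAt_const x₀ t₀))).deriv
  have hline :
      Tendsto (fun s : ℝ => (x₀, t₀) + s • ((1 : ℝ), (1 : ℝ))) (𝓝 0) (𝓝 (x₀, t₀)) :=
    (by fun_prop : Continuous _).tendsto' 0 _ (by simp)
  have hmax : IsLocalMax (fun s : ℝ => φ ((x₀, t₀) + s • ((1 : ℝ), (1 : ℝ)))) 0 := by
    filter_upwards [hline.eventually hmin] with s hs
    simp only [Prod.smul_mk, smul_eq_mul, mul_one, zero_smul, add_zero, Prod.mk_add_mk,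
      add_sub_add_right_eq_sub] at hs ⊢
    linarith
  rw [ht, hx, ← map_add, show ((0 : ℝ), (1 : ℝ)) + (1, 0) = (1, 1) by norm_num]
  exact hmax.hasDerivAt_eq_zero (hφ.hasFDerivAt.hasLineDerivAt _)

theorem deriv_mem_Icc_of_isLocalMin_sub_comp_sub (hg : Monotone g)
    (hg_slope : Antitone fun y => g y - y) (hφ : DifferentiableAt ℝ φ (x₀, t₀))
    (hmin : IsLocalMin (fun p => g (p.1 - p.2) - φ p) (x₀, t₀)) :
    deriv (fun ξ => φ (ξ, t₀)) x₀ ∈ Icc 0 1 := by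
  have hpartial : HasDerivAt (fun ξ => φ (ξ, t₀)) (deriv (fun ξ => φ (ξ, t₀)) x₀) x₀ :=
    (hφ.comp x₀ (differentiableAt_id.prodMk (differentiableAt_const t₀))).hasDerivAt
  refine hpartial.mem_Icc_of_isLocalMin_sub (g := fun ξ => g (ξ - t₀))
    (fun _ _ h => hg (sub_le_sub_right h t₀)) (fun y z h => ?_)
    (hmin.comp_continuous (g := fun ξ : ℝ => (ξ, t₀)) (by fun_prop))
  linarith [hg_slope (sub_le_sub_right h t₀)]

end TravelingWave

theorem statement18_general
    (F : ℝ → ℝ)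
    (hF1 : ∀ p ∈ Set.Icc (0:ℝ) 1, F p = p)
    (ψ : ℝ × ℝ → ℝ) (hψ : ∀ x t : ℝ, ψ (x, t) = max (x - t + 1) 0) :
    ∀ φ : ℝ × ℝ → ℝ, ContDiff ℝ 2 φ →
      ∀ x₀ t₀ : ℝ, 0 < t₀ →
        IsLocalMin (fun p => ψ p - φ p) (x₀, t₀) →
        0 ≤ deriv (fun τ => φ (x₀, τ)) t₀ + F (deriv (fun ξ => φ (ξ, t₀)) x₀) := by
  intro φ hφ x₀ t₀ _ hmin
  obtain rfl : ψ = fun p => max (p.1 - p.2 + 1) 0 := funext fun p => hψ p.1 p.2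
  have hφ' : DifferentiableAt ℝ φ (x₀, t₀) := hφ.differentiable (by norm_num) _
  have hg : Monotone fun y : ℝ => max (y + 1) 0 := fun _ _ h => max_le_max (by linarith) le_rfl
  have hg_slope : Antitone fun y : ℝ => max (y + 1) 0 - y := fun y z h =>
    sub_le_iff_le_add.2 (max_le (by linarith [le_max_left (y + 1) 0])
      (by linarith [le_max_right (y + 1) 0]))
  have hIcc := deriv_mem_Icc_of_isLocalMin_sub_comp_sub hg hg_slope hφ' hmin
  have hsum :=
    deriv_add_deriv_eq_zero_of_isLocalMin_sub_comp_sub (g := fun y => max (y + 1) 0) hφ' hmin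
  rw [hF1 _ hIcc, hsum]

/-- If `F : ℝ → ℝ` is continuous with `F(p) = p` for `p ∈ [0,1]`, then
`ψ(x,t) = max{x - t + 1, 0}` is a viscosity supersolution of `ψ_t + F(ψ_x) = 0` in
`ℝ × (0,∞)`: for every `C²` test function `φ` and every point `(x₀,t₀)` with `t₀ > 0` at
which `ψ - φ` attains a local minimum, `∂_t φ(x₀,t₀) + F(∂_x φ(x₀,t₀)) ≥ 0`. -/
theorem statement18
    (F : ℝ → ℝ) (hF : Continuous F)
    (hF1 : ∀ p ∈ Set.Icc (0:ℝ) 1, F p = p)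
    (ψ : ℝ × ℝ → ℝ) (hψ : ∀ x t : ℝ, ψ (x, t) = max (x - t + 1) 0) :
    ∀ φ : ℝ × ℝ → ℝ, ContDiff ℝ 2 φ →
      ∀ x₀ t₀ : ℝ, 0 < t₀ →
        IsLocalMin (fun p => ψ p - φ p) (x₀, t₀) →
        0 ≤ deriv (fun τ => φ (x₀, τ)) t₀ + F (deriv (fun ξ => φ (ξ, t₀)) x₀) :=
  statement18_general F hF1 ψ hψ
end
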